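/- If 0 < x ≤ z < y < 1, then y^x (y^{y-x} - 1) > z^x (z^{y-x} - 1). -/

import Mathlib

/-!
Since `t ^ x * (t ^ (y - x) - 1) = t ^ y - t ^ x`, it suffices that `g t = t ^ y - t ^ x` is
strictly increasing on `[x, ∞)`. Its derivative `t ^ (x - 1) * (y * t ^ (y - x) - x)` is positive
there because `y * t ^ (y - x) ≥ y * x ^ (y - x) > x`, the last inequality being Bernoulli's
inequality `x ^ (1 + x - y) ≤ 1 + (1 + x - y) * (x - 1) < y`.
-/

open Real Set

lemma lt_mul_rpow_sub {x y : ℝ} (hx : 0 < x) (hxy : x < y) (hy : y ≤ 1 + x) :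
    x < y * x ^ (y - x) := by
  have hbernoulli : x ^ (1 + x - y) ≤ 1 + (1 + x - y) * (x - 1) := by
    simpa using rpow_one_add_le_one_add_mul_self (s := x - 1) (by linarith)
      (p := 1 + x - y) (by linarith) (by linarith)
  have hlt : x ^ (1 + x - y) < y := by nlinarith
  calc x = x ^ (1 + x - y) * x ^ (y - x) := by rw [← rpow_add hx]; norm_num
    _ < y * x ^ (y - x) := mul_lt_mul_of_pos_right hlt (rpow_pos_of_pos hx _)

lemma mul_rpow_sub_one_lt {x y t : ℝ} (hx : 0 < x) (hxt : x ≤ t) (hxy : x < y)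
    (hy : y ≤ 1 + x) : x * t ^ (x - 1) < y * t ^ (y - 1) := by
  have ht : 0 < t := hx.trans_le hxt
  have hlt : x < y * t ^ (y - x) := calc
    x < y * x ^ (y - x) := lt_mul_rpow_sub hx hxy hy
    _ ≤ y * t ^ (y - x) := by gcongr; linarith
  calc x * t ^ (x - 1) < y * t ^ (y - x) * t ^ (x - 1) :=
        mul_lt_mul_of_pos_right hlt (rpow_pos_of_pos ht _)
    _ = y * t ^ (y - 1) := by rw [mul_assoc, ← rpow_add ht]; ring_nf

lemma strictMonoOn_rpow_sub_rpow {x y : ℝ} (hx : 0 < x) (hxy : x < y) (hy : y ≤ 1 + x) :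
    StrictMonoOn (fun t : ℝ => t ^ y - t ^ x) (Ici x) := by
  apply strictMonoOn_of_deriv_pos (convex_Ici x)
  · exact ((continuous_rpow_const (hx.trans hxy).le).sub
      (continuous_rpow_const hx.le)).continuousOn
  · intro t ht
    rw [interior_Ici] at ht
    have ht0 : t ≠ 0 := (hx.trans ht).ne'
    have hderiv : HasDerivAt (fun t : ℝ => t ^ y - t ^ x)
        (y * t ^ (y - 1) - x * t ^ (x - 1)) t :=
      (hasDerivAt_rpow_const (Or.inl ht0)).sub (hasDerivAt_rpow_const (Or.inl ht0))
    rw [hderiv.deriv, sub_pos]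
    exact mul_rpow_sub_one_lt hx ht.le hxy hy

lemma rpow_mul_rpow_sub_sub_one {t x y : ℝ} (ht : 0 < t) :
    t ^ x * (t ^ (y - x) - 1) = t ^ y - t ^ x := by
  rw [mul_sub, mul_one, ← rpow_add ht, add_sub_cancel]

theorem stmt_12 (x y z : ℝ) (hx : 0 < x) (hxz : x ≤ z) (hzy : z < y) (hy : y < 1) :
    z ^ x * (z ^ (y - x) - 1) < y ^ x * (y ^ (y - x) - 1) := by
  have hxy : x < y := hxz.trans_lt hzy
  rw [rpow_mul_rpow_sub_sub_one (hx.trans_le hxz), rpow_mul_rpow_sub_sub_one (hx.trans hxy)]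
  exact strictMonoOn_rpow_sub_rpow hx hxy (by linarith) hxz (hxz.trans hzy.le) hzy
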